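/- Let X be a real normed linear space, let A, B ⊆ X be closed and nonempty, and let a ∈ A, b ∈ B. If there exists ρ > 0 such that ‖a − b‖ = d(A ∩ B_ρ(a), B ∩ B_ρ(b)) > 0, then the pair {A,B} is locally extremal relative to a and b. -/
import Mathlib


open Metric

variable {X : Type*} [NormedAddCommGroup X] [NormedSpace ℝ X]

/-- The pair {A,B} is extremal relative to the points `a ∈ A` and `b ∈ B`. -/
def ExtremalRel (A B : Set X) (a b : X) : Prop :=
  ∀ ε > (0 : ℝ), ∃ u v : X,
    ((fun x => x - a - u) '' A) ∩ ((fun x => x - b - v) '' B) = ∅ ∧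
    max ‖u‖ ‖v‖ < ε

/-- The pair {A,B} is locally extremal relative to the points `a ∈ A` and `b ∈ B`. -/
def LocallyExtremalRel (A B : Set X) (a b : X) : Prop :=
  ∃ ρ > (0 : ℝ), ∀ ε > (0 : ℝ), ∃ u v : X,
    ((fun x => x - a - u) '' A) ∩ ((fun x => x - b - v) '' B) ∩
      closedBall (0 : X) ρ = ∅ ∧
    max ‖u‖ ‖v‖ < ε

/-- The pair {A,B} is stationary relative to the points `a ∈ A` and `b ∈ B`. -/
def StationaryRel (A B : Set X) (a b : X) : Prop :=
  ∀ ε > (0 : ℝ), ∃ ρ : ℝ, 0 < ρ ∧ ρ < ε ∧ ∃ u v : X,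
    ((fun x => x - a - u) '' A) ∩ ((fun x => x - b - v) '' B) ∩
      closedBall (0 : X) ρ = ∅ ∧
    max ‖u‖ ‖v‖ < ε * ρ

/-- The pair {A,B} is approximately stationary relative to `a ∈ A` and `b ∈ B`. -/
def ApproxStationaryRel (A B : Set X) (a b : X) : Prop :=
  ∀ ε > (0 : ℝ), ∃ ρ : ℝ, 0 < ρ ∧ ρ < ε ∧
    ∃ a' ∈ A ∩ ball a ε, ∃ b' ∈ B ∩ ball b ε, ∃ u v : X,
      ((fun x => x - a' - u) '' A) ∩ ((fun x => x - b' - v) '' B) ∩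
        closedBall (0 : X) ρ = ∅ ∧
      max ‖u‖ ‖v‖ < ε * ρ

/-- The distance between two sets: `inf {‖x − y‖ : x ∈ A, y ∈ B}`. -/
noncomputable def setDist (A B : Set X) : ℝ :=
  sInf {d : ℝ | ∃ x ∈ A, ∃ y ∈ B, d = ‖x - y‖}


lemma setDist_le' {S T : Set X} {p q : X} (hp : p ∈ S) (hq : q ∈ T) :
    setDist S T ≤ ‖p - q‖ := by
  apply csInf_le
  · exact ⟨0, by rintro r ⟨x, _, y, _, rfl⟩; positivity⟩
  · exact ⟨p, hp, q, hq, rfl⟩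

/-- Proposition 4.2(ii): if the distance between the localized sets is positive and
attained at `a` and `b`, then {A,B} is locally extremal relative to `a` and `b`. -/
theorem stmt_13 (A B : Set X) (hA : IsClosed A) (hB : IsClosed B)
    (hAne : A.Nonempty) (hBne : B.Nonempty)
    (a : X) (ha : a ∈ A) (b : X) (hb : b ∈ B)
    (hex : ∃ ρ > (0 : ℝ), ‖a - b‖ = setDist (A ∩ ball a ρ) (B ∩ ball b ρ) ∧
      0 < setDist (A ∩ ball a ρ) (B ∩ ball b ρ)) :
    LocallyExtremalRel A B a b := by
  obtain ⟨ρ, hρ, heq, hpos⟩ := hex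
  have hd : 0 < ‖a - b‖ := heq ▸ hpos
  refine ⟨ρ / 3, by positivity, ?_⟩
  intro ε hε
  set t := min ε (min ρ ‖a - b‖) / 2 with ht
  have ht0 : 0 < t := by
    have : 0 < min ε (min ρ ‖a - b‖) := lt_min hε (lt_min hρ hd)
    positivity
  have htε : t < ε := by
    have : min ε (min ρ ‖a - b‖) ≤ ε := min_le_left _ _
    linarith
  have htρ : t ≤ ρ / 2 := by
    have : min ε (min ρ ‖a - b‖) ≤ ρ := (min_le_right _ _).trans (min_le_left _ _)
    linarith
  have htd : t ≤ ‖a - b‖ / 2 := by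
    have : min ε (min ρ ‖a - b‖) ≤ ‖a - b‖ := (min_le_right _ _).trans (min_le_right _ _)
    linarith
  refine ⟨-((t / ‖a - b‖) • (a - b)), 0, ?_, ?_⟩
  · rw [Set.eq_empty_iff_forall_notMem]
    rintro x ⟨⟨⟨p, hp, hpx⟩, ⟨q, hq, hqx⟩⟩, hx⟩
    simp only [mem_closedBall, dist_zero_right] at hx
    have hxρ : ‖x‖ ≤ ρ / 3 := hx
    have hu : ‖(t / ‖a - b‖) • (a - b)‖ = t := by
      rw [norm_smul, Real.norm_eq_abs, abs_of_pos (by positivity)]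
      field_simp
    -- p ∈ A ∩ ball a ρ
    have hpa : p - a = x - (t / ‖a - b‖) • (a - b) := by
      have := hpx; simp only at this
      rw [← this]; abel
    have hpball : p ∈ ball a ρ := by
      rw [mem_ball, dist_eq_norm, hpa]
      calc ‖x - (t / ‖a - b‖) • (a - b)‖ ≤ ‖x‖ + ‖(t / ‖a - b‖) • (a - b)‖ :=
            norm_sub_le _ _
        _ ≤ ρ / 3 + t := by rw [hu]; linarith
        _ < ρ := by linarith
    have hqb : q - b = x := by
      have := hqx; simp only [sub_zero] at this; exact this
    have hqball : q ∈ ball b ρ := by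
      rw [mem_ball, dist_eq_norm, hqb]
      linarith
    have hle : setDist (A ∩ ball a ρ) (B ∩ ball b ρ) ≤ ‖p - q‖ :=
      setDist_le' ⟨hp, hpball⟩ ⟨hq, hqball⟩
    have hpq : p - q = (1 - t / ‖a - b‖) • (a - b) := by
      have : p - q = (p - a) - (q - b) + (a - b) := by abel
      rw [this, hpa, hqb, sub_smul, one_smul]
      abel
    have hnorm : ‖p - q‖ = ‖a - b‖ - t := by
      rw [hpq, norm_smul, Real.norm_eq_abs, abs_of_pos]
      · field_simp
      · have : t / ‖a - b‖ ≤ 1 / 2 := by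
          rw [div_le_div_iff₀ hd (by norm_num)]; linarith
        linarith
    rw [hnorm, ← heq] at hle
    linarith
  · simp only [norm_neg, norm_zero, max_eq_left (norm_nonneg _)]
    have hu : ‖(t / ‖a - b‖) • (a - b)‖ = t := by
      rw [norm_smul, Real.norm_eq_abs, abs_of_pos (by positivity)]
      field_simp
    rw [hu]; exact htε
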